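/- arXiv:1509.02959 — 6 statements merged into one kernel-verified Lean document; each statement's English description precedes it below -/
import Mathlib

section
/- For an odd integer j ≥ 1, the binomial coefficient C(j, (j+1)/2) is odd if and only if j = 2^t − 1 for some integer t ≥ 1. -/
lemma odd_choose_aux : ∀ k : ℕ, 1 ≤ k → (Odd ((2 * k - 1).choose k) ↔ ∃ s : ℕ, k = 2 ^ s) := by
  intro k
  induction k using Nat.strong_induction_on with
  | _ k ih =>
  intro hk
  haveI : Fact (Nat.Prime 2) := ⟨Nat.prime_two⟩
  have lucas := @Choose.choose_modEq_choose_mod_mul_choose_div_nat (2 * k - 1) k 2 _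
  have hmod : (2 * k - 1) % 2 = 1 := by omega
  have hdiv : (2 * k - 1) / 2 = k - 1 := by omega
  have hone : Nat.choose 1 (k % 2) = 1 := by
    rcases Nat.even_or_odd k with h | h
    · simp [Nat.even_iff.mp h]
    · simp [Nat.odd_iff.mp h]
  rw [hmod, hdiv, hone, one_mul] at lucas
  have key : Odd ((2 * k - 1).choose k) ↔ Odd ((k - 1).choose (k / 2)) := by
    rw [Nat.odd_iff, Nat.odd_iff, lucas]
  rw [key]
  rcases Nat.even_or_odd k with h | h
  · -- k even, k = 2m
    obtain ⟨m, hm⟩ := h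
    have hm1 : 1 ≤ m := by omega
    have hlt : m < k := by omega
    have h1 : k - 1 = 2 * m - 1 := by omega
    have h2 : k / 2 = m := by omega
    rw [h1, h2, ih m hlt hm1]
    constructor
    · rintro ⟨s, rfl⟩
      exact ⟨s + 1, by rw [pow_succ]; omega⟩
    · rintro ⟨s, hs⟩
      rcases s with _ | s
      · omega
      · exact ⟨s, by rw [pow_succ] at hs; omega⟩
  · -- k odd, k = 2m+1
    obtain ⟨m, hm⟩ := h
    have h1 : k - 1 = 2 * m := by omega
    have h2 : k / 2 = m := by omega
    rw [h1, h2]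
    constructor
    · intro hodd
      have hm0 : m = 0 := by
        by_contra hm0
        have := Nat.two_dvd_centralBinom_of_one_le (n := m) (by omega)
        rw [Nat.centralBinom_eq_two_mul_choose] at this
        exact (Nat.not_even_iff_odd.mpr hodd) (even_iff_two_dvd.mpr this)
      exact ⟨0, by omega⟩
    · rintro ⟨s, hs⟩
      have : m = 0 := by
        rcases s with _ | s
        · omega
        · exfalso; rw [pow_succ] at hs; omega
      simp [this]

/-- For an odd integer `j ≥ 1`, the binomial coefficient `C(j, (j+1)/2)` is odd if
and only if `j = 2^t − 1` for some integer `t ≥ 1`. -/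
theorem odd_choose_succ_half_iff (j : ℕ) (h1 : 1 ≤ j) (hj : Odd j) :
    Odd (Nat.choose j ((j + 1) / 2)) ↔ ∃ t : ℕ, 1 ≤ t ∧ j = 2 ^ t - 1 := by
  obtain ⟨m, hm⟩ := hj
  set k := m + 1 with hkdef
  have hk : 1 ≤ k := by omega
  have hj' : j = 2 * k - 1 := by omega
  have hhalf : (j + 1) / 2 = k := by omega
  rw [hhalf, hj', odd_choose_aux k hk]
  constructor
  · rintro ⟨s, hs⟩
    refine ⟨s + 1, by omega, ?_⟩
    rw [pow_succ]
    omega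
  · rintro ⟨t, ht, hjt⟩
    rcases t with _ | t
    · omega
    · refine ⟨t, ?_⟩
      rw [pow_succ] at hjt
      have : 1 ≤ 2 ^ t := Nat.one_le_two_pow
      omega
end

section
/- For j = 2^t + 1 with t ≥ 2, the binomial coefficient C(j, (j+1)/2) is divisible by 2 but not by 4. -/
/-!
By Kummer's theorem, `v₂ (C(n, k))` equals the binary digit sum of `k` plus that of `n - k` minus
that of `n`. With `n = 2^(s+1) + 1` and `k = 2^s + 1` the three digit sums are `2`, `1` and `2`, so
`C(n, k)` is exactly once divisible by `2`.
-/

namespace Nat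

theorem sum_digits_pow {b : ℕ} (hb : 1 < b) (a : ℕ) : (b.digits (b ^ a)).sum = 1 := by
  have h := digits_base_pow_mul hb one_pos (k := a)
  rw [mul_one] at h
  simp [h, digits_of_lt b 1 one_ne_zero hb]

theorem sum_digits_pow_add_one {b a : ℕ} (hb : 1 < b) (ha : 0 < a) :
    (b.digits (b ^ a + 1)).sum = 2 := by
  obtain ⟨a, rfl⟩ : ∃ c, a = c + 1 := ⟨a - 1, by omega⟩
  have h := digits_add b hb 1 (b ^ a) (by omega) (Or.inl one_ne_zero)
  rw [show 1 + b * b ^ a = b ^ (a + 1) + 1 by ring] at h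
  simp [h, sum_digits_pow hb]

theorem padicValNat_two_choose_two_pow_add_one {s : ℕ} (hs : 0 < s) :
    padicValNat 2 (choose (2 ^ (s + 1) + 1) (2 ^ s + 1)) = 1 := by
  have kummer := sub_one_mul_padicValNat_choose_eq_sub_sum_digits' (p := 2)
    (n := 2 ^ s) (k := 2 ^ s + 1)
  rw [show 2 ^ s + (2 ^ s + 1) = 2 ^ (s + 1) + 1 by ring, sum_digits_pow_add_one one_lt_two hs,
    sum_digits_pow one_lt_two, sum_digits_pow_add_one one_lt_two (succ_pos s)] at kummer
  simpa using kummer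

theorem dvd_and_not_pow_two_dvd_of_padicValNat_eq_one {p n : ℕ} [Fact p.Prime] (hn : n ≠ 0)
    (h : padicValNat p n = 1) : p ∣ n ∧ ¬ p ^ 2 ∣ n := by
  refine ⟨?_, ?_⟩
  · simpa [h] using pow_padicValNat_dvd (p := p) (n := n)
  · simpa [h] using pow_succ_padicValNat_not_dvd (p := p) hn

end Nat

/-- For `j = 2^t + 1` with `t ≥ 2`, the binomial coefficient `C(j, (j+1)/2)` is
divisible by `2` but not by `4`. -/
theorem choose_two_pow_add_one (t : ℕ) (ht : 2 ≤ t) :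
    2 ∣ Nat.choose (2 ^ t + 1) ((2 ^ t + 1 + 1) / 2) ∧
      ¬ (4 ∣ Nat.choose (2 ^ t + 1) ((2 ^ t + 1 + 1) / 2)) := by
  obtain ⟨s, rfl⟩ : ∃ s, t = s + 1 := ⟨t - 1, by omega⟩
  have hk : (2 ^ (s + 1) + 1 + 1) / 2 = 2 ^ s + 1 := by omega
  rw [hk]
  have hchoose : Nat.choose (2 ^ (s + 1) + 1) (2 ^ s + 1) ≠ 0 :=
    (Nat.choose_pos (by rw [pow_succ]; omega)).ne'
  simpa using Nat.dvd_and_not_pow_two_dvd_of_padicValNat_eq_one (p := 2) hchoose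
    (Nat.padicValNat_two_choose_two_pow_add_one (by omega))
end

section
/- Every 3-bit Gray code (a 3×8 binary matrix whose columns list all vectors of {0,1}^3 with consecutive columns differing in exactly one bit) has multiset of row transition counts equal to one of {3,2,2}, {3,3,1}, or {4,2,1}. -/
/-- A 3-bit Gray code: a `3 × 8` binary matrix whose columns list all vectors of
`{0,1}^3`, with consecutive columns differing in exactly one bit. -/
def IsGrayCode3 (M : Fin 3 → Fin 8 → Bool) : Prop :=
  Function.Bijective (fun j : Fin 8 => fun i : Fin 3 => M i j) ∧
  ∀ j : Fin 7,
    (Finset.univ.filter fun i : Fin 3 => M i j.castSucc ≠ M i j.succ).card = 1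

/-- The transition count of row `i` of a `3 × 8` binary matrix: the number of
consecutive bit changes within the row (no wrap-around). -/
def transCount3 (M : Fin 3 → Fin 8 → Bool) (i : Fin 3) : ℕ :=
  (Finset.univ.filter fun j : Fin 7 => M i j.castSucc ≠ M i j.succ).card

/-- Path in the cube determined by a start vertex and a sequence of bit flips. -/
def pth (s : Fin 3 → Bool) (f : Fin 7 → Fin 3) : ℕ → Fin 3 → Bool
  | 0 => s
  | n+1 => fun i => if h : n < 7 then xor (decide (f ⟨n, h⟩ = i)) (pth s f n i)
           else pth s f n i

lemma pth_shift (s : Fin 3 → Bool) (f : Fin 7 → Fin 3) :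
    ∀ n i, pth s f n i = xor (s i) (pth (fun _ => false) f n i) := by
  intro n
  induction n with
  | zero => intro i; simp [pth]
  | succ n ih =>
    intro i
    by_cases h : n < 7 <;> simp [pth, h, ih i] <;> cases s i <;> cases pth (fun _ => false) f n i <;> simp

set_option maxRecDepth 100000 in
set_option maxHeartbeats 4000000 in
lemma key3 : ∀ a b c d e q g : Fin 3,
    (∀ p r : Fin 8, p ≠ r → ∃ i : Fin 3,
      pth (fun _ => false) ![a,b,c,d,e,q,g] p.val i ≠ pth (fun _ => false) ![a,b,c,d,e,q,g] r.val i) →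
    (Multiset.map (fun i : Fin 3 => (Finset.univ.filter fun j : Fin 7 => (![a,b,c,d,e,q,g] : Fin 7 → Fin 3) j = i).card)
      Finset.univ.val = ({3,2,2} : Multiset ℕ) ∨
    Multiset.map (fun i : Fin 3 => (Finset.univ.filter fun j : Fin 7 => (![a,b,c,d,e,q,g] : Fin 7 → Fin 3) j = i).card)
      Finset.univ.val = ({3,3,1} : Multiset ℕ) ∨
    Multiset.map (fun i : Fin 3 => (Finset.univ.filter fun j : Fin 7 => (![a,b,c,d,e,q,g] : Fin 7 → Fin 3) j = i).card)
      Finset.univ.val = ({4,2,1} : Multiset ℕ)) := by decide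

/-- Every 3-bit Gray code has multiset of row transition counts equal to one of
`{3,2,2}`, `{3,3,1}` or `{4,2,1}`. -/
theorem grayCode3_transCounts (M : Fin 3 → Fin 8 → Bool) (h : IsGrayCode3 M) :
    Multiset.map (transCount3 M) Finset.univ.val = ({3, 2, 2} : Multiset ℕ) ∨
    Multiset.map (transCount3 M) Finset.univ.val = ({3, 3, 1} : Multiset ℕ) ∨
    Multiset.map (transCount3 M) Finset.univ.val = ({4, 2, 1} : Multiset ℕ) := by
  obtain ⟨hbij, hstep⟩ := h
  have hf : ∀ j : Fin 7, ∃ a,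
      (Finset.univ.filter fun i : Fin 3 => M i j.castSucc ≠ M i j.succ) = {a} :=
    fun j => Finset.card_eq_one.mp (hstep j)
  choose f hfspec using hf
  have hmem : ∀ j : Fin 7, ∀ i : Fin 3, (M i j.castSucc ≠ M i j.succ) ↔ i = f j := by
    intro j i
    constructor
    · intro hne
      have : i ∈ Finset.univ.filter fun i : Fin 3 => M i j.castSucc ≠ M i j.succ := by
        simp [hne]
      rw [hfspec j] at this
      simpa using this
    · rintro rfl
      have : f j ∈ ({f j} : Finset (Fin 3)) := Finset.mem_singleton_self _
      rw [← hfspec j] at this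
      simpa using this
  -- every column is the path from column 0
  have hM : ∀ j : Fin 8, ∀ i : Fin 3, M i j = pth (fun i => M i 0) f j.val i := by
    intro j
    induction j using Fin.induction with
    | zero => intro i; simp [pth]
    | succ j ih =>
      intro i
      have hv : (j.succ : Fin 8).val = j.val + 1 := rfl
      rw [hv]
      have hlt : j.val < 7 := j.isLt
      have : pth (fun i => M i 0) f (j.val + 1) i
          = xor (decide (f j = i)) (pth (fun i => M i 0) f j.val i) := by
        simp [pth, hlt]
      rw [this]
      have ih' : M i j.castSucc = pth (fun i => M i 0) f j.val i := ih i
      rw [← ih']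
      by_cases hij : f j = i
      · have hne : M i j.castSucc ≠ M i j.succ := (hmem j i).mpr hij.symm
        simp only [decide_eq_true hij, Bool.true_xor]
        cases hc : M i j.castSucc <;> cases hs : M i j.succ <;> simp_all
      · have heq : M i j.castSucc = M i j.succ := by
          by_contra hne
          exact hij ((hmem j i).mp hne).symm
        simp [decide_eq_false hij, heq]
  -- distinctness of the false-based path
  have hdist : ∀ p r : Fin 8, p ≠ r → ∃ i : Fin 3,
      pth (fun _ => false) f p.val i ≠ pth (fun _ => false) f r.val i := by
    intro p r hpr
    by_contra hcon
    push_neg at hcon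
    apply hpr
    apply hbij.injective
    funext i
    show M i p = M i r
    rw [hM p i, hM r i, pth_shift (fun i => M i 0) f p.val i, hcon i]
    exact (pth_shift (fun i => M i 0) f r.val i).symm
  -- transition counts are flip counts
  have hcount : ∀ i : Fin 3, transCount3 M i
      = (Finset.univ.filter fun j : Fin 7 => f j = i).card := by
    intro i
    unfold transCount3
    congr 1
    apply Finset.filter_congr
    intro j _
    rw [hmem j i]
    exact ⟨fun hh => hh.symm, fun hh => hh.symm⟩
  have hfeq : f = ![f 0, f 1, f 2, f 3, f 4, f 5, f 6] := by
    funext j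
    fin_cases j <;> rfl
  have hmap : Multiset.map (transCount3 M) Finset.univ.val
      = Multiset.map (fun i : Fin 3 => (Finset.univ.filter fun j : Fin 7 => f j = i).card)
        Finset.univ.val :=
    Multiset.map_congr rfl (fun i _ => hcount i)
  rw [hmap, hfeq]
  apply key3
  rw [← hfeq]
  exact hdist
end

section
/- For each fixed first column c ∈ {0,1}^3, the 18 Gray codes starting at c fall into exactly 3 equivalence classes under row permutation and row bit-inversion, each class of size 6, and the classes are distinguished by their multisets of transition counts. -/
instance (M : Fin 3 → Fin 8 → Bool) : Decidable (IsGrayCode3 M) := by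
  unfold IsGrayCode3; infer_instance

/-- The multiset of row transition counts of a matrix. -/
def transCounts3 (M : Fin 3 → Fin 8 → Bool) : Multiset ℕ :=
  Multiset.map (transCount3 M) Finset.univ.val

/-- Two binary matrices are equivalent if one arises from the other by permuting
rows and/or complementing all bits of some rows. -/
def MatEquiv3 (A B : Fin 3 → Fin 8 → Bool) : Prop :=
  ∃ (π : Equiv.Perm (Fin 3)) (ε : Fin 3 → Bool),
    ∀ i j, B i j = xor (ε i) (A (π i) j)

instance (A B : Fin 3 → Fin 8 → Bool) : Decidable (MatEquiv3 A B) := by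
  unfold MatEquiv3; infer_instance

/-!
Complementing the rows in which `c` is `1` reduces everything to codes starting at `0`.
A Gray code is determined by its first column and its transition sequence `τ` (the row
flipped at each step); `τ` never flips the same row twice in a row, so after relabelling
the rows it begins `0, 1`, and a finite search over the remaining five steps leaves
`0102010`, `0102101` and `0121012`. Hence every Gray code starting at `c` is obtained from
one of these three codes `R₀, R₁, R₂` by a row permutation `π` followed by complementing
the rows of `c`, with `(k, π)` unique: the rows of a Gray code are distinct and the three
`Rₖ` have transition counts `{1,2,4}`, `{1,3,3}` and `{2,2,3}`. Since transition counts
are invariant under equivalence, the class of a code is the index `k`.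
-/

open Finset Function

theorem Equiv.Perm.exists_apply_eq_and_apply_eq {α : Type*} [DecidableEq α] {x y a b : α}
    (hxy : x ≠ y) (hab : a ≠ b) : ∃ π : Equiv.Perm α, π x = a ∧ π y = b := by
  set σ := Equiv.swap x a
  have hx : x ≠ σ.symm b := fun h => hab <| calc
    a = σ x := (Equiv.swap_apply_left x a).symm
    _ = b := by rw [h, Equiv.apply_symm_apply]
  refine ⟨σ * Equiv.swap y (σ.symm b), ?_, ?_⟩
  · rw [Equiv.Perm.mul_apply, Equiv.swap_apply_of_ne_of_ne hxy hx, Equiv.swap_apply_left]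
  · rw [Equiv.Perm.mul_apply, Equiv.swap_apply_left, Equiv.apply_symm_apply]

def rowAct (π : Equiv.Perm (Fin 3)) (ε : Fin 3 → Bool) (A : Fin 3 → Fin 8 → Bool) :
    Fin 3 → Fin 8 → Bool :=
  fun i j => xor (ε i) (A (π i) j)

theorem matEquiv3_rowAct (π : Equiv.Perm (Fin 3)) (ε : Fin 3 → Bool)
    (A : Fin 3 → Fin 8 → Bool) : MatEquiv3 A (rowAct π ε A) :=
  ⟨π, ε, fun _ _ => rfl⟩

namespace MatEquiv3

variable {A B C : Fin 3 → Fin 8 → Bool}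

theorem symm (h : MatEquiv3 A B) : MatEquiv3 B A := by
  obtain ⟨π, ε, h⟩ := h
  exact ⟨π⁻¹, fun i => ε (π⁻¹ i), fun i j => by simp [h]⟩

theorem trans (h₁ : MatEquiv3 A B) (h₂ : MatEquiv3 B C) : MatEquiv3 A C := by
  obtain ⟨π, ε, h₁⟩ := h₁
  obtain ⟨σ, δ, h₂⟩ := h₂
  exact ⟨σ.trans π, fun i => xor (δ i) (ε (σ i)), fun i j => by simp [h₁, h₂]⟩

theorem transCounts3_eq (h : MatEquiv3 A B) : transCounts3 A = transCounts3 B := by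
  obtain ⟨π, ε, h⟩ := h
  have hrow : ∀ i, transCount3 B i = transCount3 A (π i) := by
    simp [transCount3, h]
  rw [transCounts3, transCounts3, show transCount3 B = transCount3 A ∘ π from funext hrow,
    ← Multiset.map_map, Multiset.map_univ_val_equiv]

theorem isGrayCode3 (h : MatEquiv3 A B) (hA : IsGrayCode3 A) : IsGrayCode3 B := by
  obtain ⟨π, ε, h⟩ := h
  refine ⟨(Fintype.bijective_iff_injective_and_card _).mpr ⟨fun j j' hjj' => ?_, rfl⟩,
    fun j => ?_⟩
  · refine hA.1.1 (funext fun i => ?_)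
    simpa [h] using congrFun hjj' (π⁻¹ i)
  · rw [← hA.2 j]
    simp only [card_filter, h, ne_eq, Bool.xor_right_inj]
    exact Equiv.sum_comp π fun i => if A i j.castSucc ≠ A i j.succ then 1 else 0

end MatEquiv3

theorem IsGrayCode3.injective_rows {A : Fin 3 → Fin 8 → Bool} (hA : IsGrayCode3 A) :
    Injective A := by
  intro i i' hii'
  obtain ⟨j, hj⟩ := hA.1.2 fun x => decide (x = i)
  have hi : A i j = true := by simpa using congrFun hj i
  have hi' : A i' j = decide (i' = i) := congrFun hj i'
  rw [← hii', hi] at hi'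
  exact (of_decide_eq_true hi'.symm).symm

def IsTransitionSeq (A : Fin 3 → Fin 8 → Bool) (τ : Fin 7 → Fin 3) : Prop :=
  ∀ j i, A i j.castSucc ≠ A i j.succ ↔ i = τ j

theorem IsGrayCode3.exists_isTransitionSeq {A : Fin 3 → Fin 8 → Bool} (hA : IsGrayCode3 A) :
    ∃ τ, IsTransitionSeq A τ := by
  choose τ hτ using fun j => card_eq_one.mp (hA.2 j)
  exact ⟨τ, fun j i => by simpa using Finset.ext_iff.mp (hτ j) i⟩

namespace IsTransitionSeq

variable {A B : Fin 3 → Fin 8 → Bool} {τ : Fin 7 → Fin 3}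

theorem eq_of_first_column (hA : IsTransitionSeq A τ) (hB : IsTransitionSeq B τ)
    (h0 : ∀ i, A i 0 = B i 0) : A = B := by
  funext i j
  induction j using Fin.induction with
  | zero => exact h0 i
  | succ j ih =>
    have hAj := hA j i
    have hBj := hB j i
    rw [ih] at hAj
    revert hAj hBj
    cases A i j.succ <;> cases B i j.succ <;> cases B i j.castSucc <;> simp

theorem castSucc_ne_succ (hτ : IsTransitionSeq A τ) (hA : Injective fun j i => A i j)
    (j : Fin 6) : τ j.castSucc ≠ τ j.succ := by
  intro hj
  have hcol : (fun i => A i j.castSucc.castSucc) = fun i => A i j.succ.succ := by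
    funext i
    have h₁ := hτ j.castSucc i
    have h₂ := hτ j.succ i
    rw [Fin.succ_castSucc, hj] at h₁
    revert h₁ h₂
    cases A i j.castSucc.castSucc <;> cases A i j.succ.castSucc <;> cases A i j.succ.succ <;>
      simp
  have := congrArg Fin.val (hA hcol)
  simp at this
  omega

theorem rowAct (hτ : IsTransitionSeq A τ) (π : Equiv.Perm (Fin 3)) (ε : Fin 3 → Bool) :
    IsTransitionSeq (rowAct π ε A) (π.symm ∘ τ) := fun j i => by
  simp [_root_.rowAct, hτ j (π i), Equiv.eq_symm_apply]

end IsTransitionSeq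

/-- Column `j` is the point of `{0,1}^3` reached from `0` by flipping the coordinates
`t 0, …, t (j - 1)` in turn. -/
def walkMatrix (t : Fin 7 → Fin 3) (i : Fin 3) (j : Fin 8) : Bool :=
  Fin.induction (motive := fun _ => Fin 3 → Bool) (fun _ => false)
    (fun k v => update v (t k) (!v (t k))) j i

theorem walkMatrix_zero (t : Fin 7 → Fin 3) (i : Fin 3) : walkMatrix t i 0 = false := rfl

theorem isTransitionSeq_walkMatrix (t : Fin 7 → Fin 3) : IsTransitionSeq (walkMatrix t) t := by
  intro j i
  rw [walkMatrix, walkMatrix, Fin.induction_succ, update_apply]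
  split_ifs with h <;> simp [h]

theorem eq_walkMatrix {A : Fin 3 → Fin 8 → Bool} {τ : Fin 7 → Fin 3}
    (hτ : IsTransitionSeq A τ) (h0 : ∀ i, A i 0 = false) : A = walkMatrix τ :=
  hτ.eq_of_first_column (isTransitionSeq_walkMatrix τ) h0

def grayTransitions : Fin 3 → Fin 7 → Fin 3 :=
  ![![0, 1, 0, 2, 0, 1, 0], ![0, 1, 0, 2, 1, 0, 1], ![0, 1, 2, 1, 0, 1, 2]]

theorem exists_eq_grayTransitions {t : Fin 7 → Fin 3} (ht₀ : t 0 = 0) (ht₁ : t 1 = 1)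
    (ht : Injective fun j i => walkMatrix t i j) : ∃ k, t = grayTransitions k := by
  have search : ∀ a b c d e : Fin 3,
      Injective (fun j i => walkMatrix ![0, 1, a, b, c, d, e] i j) →
      ∃ k, ![0, 1, a, b, c, d, e] = grayTransitions k := by
    decide
  have hform : t = ![0, 1, t 2, t 3, t 4, t 5, t 6] := by
    funext j
    fin_cases j <;> simp [ht₀, ht₁]
  rw [hform] at ht ⊢
  exact search _ _ _ _ _ ht

def grayRep (k : Fin 3) : Fin 3 → Fin 8 → Bool := walkMatrix (grayTransitions k)

theorem isGrayCode3_grayRep (k : Fin 3) : IsGrayCode3 (grayRep k) := by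
  revert k
  decide

theorem injective_transCounts3_grayRep : Injective fun k => transCounts3 (grayRep k) := by
  decide

theorem transCounts3_rowAct_grayRep (π : Equiv.Perm (Fin 3)) (c : Fin 3 → Bool) (k : Fin 3) :
    transCounts3 (rowAct π c (grayRep k)) = transCounts3 (grayRep k) :=
  (matEquiv3_rowAct π c _).transCounts3_eq.symm

theorem matEquiv3_rowAct_grayRep_iff {π σ : Equiv.Perm (Fin 3)} {c d : Fin 3 → Bool}
    {k l : Fin 3} : MatEquiv3 (rowAct π c (grayRep k)) (rowAct σ d (grayRep l)) ↔ k = l := by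
  refine ⟨fun h => injective_transCounts3_grayRep ?_, ?_⟩
  · simpa only [transCounts3_rowAct_grayRep] using h.transCounts3_eq
  · rintro rfl
    exact (matEquiv3_rowAct π c _).symm.trans (matEquiv3_rowAct σ d _)

theorem injective_rowAct_grayRep (c : Fin 3 → Bool) :
    Injective fun p : Fin 3 × Equiv.Perm (Fin 3) => rowAct p.2 c (grayRep p.1) := by
  rintro ⟨k, π⟩ ⟨l, σ⟩ h
  dsimp only at h
  obtain rfl : k = l := injective_transCounts3_grayRep <| by
    simpa only [transCounts3_rowAct_grayRep] using congrArg transCounts3 h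
  refine Prod.ext rfl (Equiv.ext fun i => (isGrayCode3_grayRep k).injective_rows ?_)
  funext j
  simpa [rowAct] using congrFun (congrFun h i) j

theorem isGrayCode3_and_startsAt_iff {A : Fin 3 → Fin 8 → Bool} {c : Fin 3 → Bool} :
    (IsGrayCode3 A ∧ ∀ i, A i 0 = c i) ↔ ∃ k π, rowAct π c (grayRep k) = A := by
  constructor
  · rintro ⟨hA, hc⟩
    obtain ⟨τ, hτ⟩ := hA.exists_isTransitionSeq
    obtain ⟨π, hπ₀, hπ₁⟩ := Equiv.Perm.exists_apply_eq_and_apply_eq (x := 0) (y := 1)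
      (by decide) (hτ.castSucc_ne_succ hA.1.1 0)
    rw [Fin.castSucc_zero] at hπ₀
    rw [Fin.succ_zero_eq_one] at hπ₁
    -- relabel the rows so that the transitions begin `0, 1`, and shift the start to `0`
    set A₀ := rowAct π (c ∘ π) A
    have hA₀ : A₀ = walkMatrix (π.symm ∘ τ) :=
      eq_walkMatrix (hτ.rowAct π _) fun i => by simp [A₀, rowAct, hc]
    have hinj : Injective fun j i => walkMatrix (π.symm ∘ τ) i j := by
      rw [← hA₀]
      exact ((matEquiv3_rowAct π _ A).isGrayCode3 hA).1.1
    obtain ⟨k, hk⟩ :=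
      exists_eq_grayTransitions (by simp [← hπ₀]) (by simp [← hπ₁]) hinj
    refine ⟨k, π⁻¹, funext fun i => funext fun j => ?_⟩
    simp [grayRep, ← hk, ← hA₀, A₀, rowAct]
  · rintro ⟨k, π, rfl⟩
    exact ⟨(matEquiv3_rowAct π c _).isGrayCode3 (isGrayCode3_grayRep k),
      fun i => by simp [rowAct, grayRep, walkMatrix_zero]⟩

theorem filter_isGrayCode3_startsAt_eq_image (c : Fin 3 → Bool) :
    (univ.filter fun A : Fin 3 → Fin 8 → Bool => IsGrayCode3 A ∧ ∀ i, A i 0 = c i) =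
      univ.image fun p : Fin 3 × Equiv.Perm (Fin 3) => rowAct p.2 c (grayRep p.1) := by
  ext A
  simp [isGrayCode3_and_startsAt_iff]

theorem filter_matEquiv3_rowAct_grayRep_eq_image (c : Fin 3 → Bool) (π : Equiv.Perm (Fin 3))
    (k : Fin 3) :
    (univ.filter fun B : Fin 3 → Fin 8 → Bool =>
        (IsGrayCode3 B ∧ ∀ i, B i 0 = c i) ∧ MatEquiv3 (rowAct π c (grayRep k)) B) =
      univ.image fun σ => rowAct σ c (grayRep k) := by
  ext B
  simp only [mem_filter, mem_univ, true_and, mem_image, isGrayCode3_and_startsAt_iff]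
  constructor
  · rintro ⟨⟨l, σ, rfl⟩, h⟩
    exact ⟨σ, by rw [matEquiv3_rowAct_grayRep_iff.mp h]⟩
  · rintro ⟨σ, rfl⟩
    exact ⟨⟨k, σ, rfl⟩, matEquiv3_rowAct_grayRep_iff.mpr rfl⟩

theorem image_transCounts3_rowAct_grayRep (c : Fin 3 → Bool) :
    (univ.image fun p : Fin 3 × Equiv.Perm (Fin 3) => rowAct p.2 c (grayRep p.1)).image
        transCounts3 = univ.image fun k => transCounts3 (grayRep k) := by
  have hcounts : (transCounts3 ∘ fun p : Fin 3 × Equiv.Perm (Fin 3) =>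
      rowAct p.2 c (grayRep p.1)) = (fun k => transCounts3 (grayRep k)) ∘ Prod.fst :=
    funext fun p => transCounts3_rowAct_grayRep _ _ _
  rw [image_image, hcounts, ← image_image, image_univ_of_surjective Prod.fst_surjective]

/-- For each fixed first column `c ∈ {0,1}^3`: there are exactly `18` Gray codes
starting at `c`; two such Gray codes are equivalent (row permutation and row
bit-inversion) iff they have the same multiset of transition counts; each
equivalence class within these Gray codes has exactly `6` elements; and there are
exactly `3` distinct transition-count multisets, i.e. exactly `3` classes. -/
theorem grayCode3_classes (c : Fin 3 → Bool) :
    (Finset.univ.filter fun A : Fin 3 → Fin 8 → Bool =>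
        IsGrayCode3 A ∧ ∀ i, A i 0 = c i).card = 18 ∧
    (∀ A B : Fin 3 → Fin 8 → Bool,
        IsGrayCode3 A → (∀ i, A i 0 = c i) → IsGrayCode3 B → (∀ i, B i 0 = c i) →
        (MatEquiv3 A B ↔ transCounts3 A = transCounts3 B)) ∧
    (∀ A : Fin 3 → Fin 8 → Bool, IsGrayCode3 A → (∀ i, A i 0 = c i) →
        (Finset.univ.filter fun B : Fin 3 → Fin 8 → Bool =>
          (IsGrayCode3 B ∧ ∀ i, B i 0 = c i) ∧ MatEquiv3 A B).card = 6) ∧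
    (Finset.image transCounts3
        (Finset.univ.filter fun A : Fin 3 → Fin 8 → Bool =>
          IsGrayCode3 A ∧ ∀ i, A i 0 = c i)).card = 3 := by
  refine ⟨?_, ?_, ?_, ?_⟩
  · rw [filter_isGrayCode3_startsAt_eq_image,
      card_image_of_injective _ (injective_rowAct_grayRep c)]
    simp [Fintype.card_perm, Nat.factorial]
  · intro A B hA hAc hB hBc
    obtain ⟨k, π, rfl⟩ := isGrayCode3_and_startsAt_iff.mp ⟨hA, hAc⟩
    obtain ⟨l, σ, rfl⟩ := isGrayCode3_and_startsAt_iff.mp ⟨hB, hBc⟩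
    rw [matEquiv3_rowAct_grayRep_iff, transCounts3_rowAct_grayRep, transCounts3_rowAct_grayRep]
    exact injective_transCounts3_grayRep.eq_iff.symm
  · intro A hA hAc
    obtain ⟨k, π, rfl⟩ := isGrayCode3_and_startsAt_iff.mp ⟨hA, hAc⟩
    have hinj : Injective fun σ => rowAct σ c (grayRep k) :=
      (injective_rowAct_grayRep c).comp (Prod.mk_right_injective k)
    rw [filter_matEquiv3_rowAct_grayRep_eq_image, card_image_of_injective _ hinj]
    simp [Fintype.card_perm, Nat.factorial]
  · rw [filter_isGrayCode3_startsAt_eq_image, image_transCounts3_rowAct_grayRep,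
      card_image_of_injective _ injective_transCounts3_grayRep, card_univ, Fintype.card_fin]
end

section
/- Let j ≥ 2 be even and d = 3j/2. The number of non-equivalent 0-equiparting matrices of size 2 × 4j equals (1/2)·C(j, j/2). -/
set_option maxRecDepth 20000

/-- The `i`-th `2 × 4` block of a `2 × 4j` binary matrix. -/
def block2 {j : ℕ} (A : Fin 2 → Fin (4 * j) → Bool) (i : Fin j) :
    Fin 2 → Fin 4 → Bool :=
  fun r s => A r ⟨4 * i.val + s.val, by have := i.isLt; have := s.isLt; omega⟩

/-- A 2-bit Gray code: a `2 × 4` binary matrix whose columns list all vectors of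
`{0,1}^2`, with consecutive columns differing in exactly one bit. -/
def IsGrayCode2 (M : Fin 2 → Fin 4 → Bool) : Prop :=
  Function.Bijective (fun s : Fin 4 => fun r : Fin 2 => M r s) ∧
  ∀ s : Fin 3,
    (Finset.univ.filter fun r : Fin 2 => M r s.castSucc ≠ M r s.succ).card = 1

/-- The transition count of row `r` of a `2 × 4j` matrix: the number of pairs of
consecutive columns at which the row entries differ (no wrap-around). -/
def rowTrans2 {j : ℕ} (A : Fin 2 → Fin (4 * j) → Bool) (r : Fin 2) : ℕ :=
  (Finset.univ.filter fun p : Fin (4 * j) × Fin (4 * j) =>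
    (p.2 : ℕ) = (p.1 : ℕ) + 1 ∧ A r p.1 ≠ A r p.2).card

/-- A `0`-equiparting matrix of size `2 × 4j`: a concatenation of `j` 2-bit Gray
codes with the last column of each block equal to the first column of the next
block, such that every row has transition count `d`. -/
def IsEquiparting0 {j : ℕ} (d : ℕ) (A : Fin 2 → Fin (4 * j) → Bool) : Prop :=
  (∀ i : Fin j, IsGrayCode2 (block2 A i)) ∧
  (∀ i : Fin j, ∀ h : i.val + 1 < j, ∀ r : Fin 2,
    block2 A i r 3 = block2 A ⟨i.val + 1, h⟩ r 0) ∧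
  ∀ r : Fin 2, rowTrans2 A r = d

/-- Equivalence of `2 × 4j` binary matrices: row permutations and/or
complementing all bits in some rows. -/
def MatEquiv {j : ℕ} (A B : Fin 2 → Fin (4 * j) → Bool) : Prop :=
  ∃ (π : Equiv.Perm (Fin 2)) (ε : Fin 2 → Bool),
    ∀ r s, B r s = xor (ε r) (A (π r) s)

/-! ### Auxiliary machinery -/

def grayF (c : Fin 2 → Bool) (a : Fin 2) (r : Fin 2) (s : Fin 4) : Bool :=
  xor (c r) (if a = r then decide (s.val = 1 ∨ s.val = 2) else decide (2 ≤ s.val))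

instance : DecidablePred IsGrayCode2 := fun M => by
  unfold IsGrayCode2; infer_instance

lemma gray_iff : ∀ M : Fin 2 → Fin 4 → Bool,
    IsGrayCode2 M ↔ ∃ c a, ∀ r s, M r s = grayF c a r s := by decide

lemma gray_of : ∀ (c : Fin 2 → Bool) (a : Fin 2), IsGrayCode2 (grayF c a) := by decide

lemma grayF_three : ∀ c a r, grayF c a r 3 = xor (c r) (decide (a ≠ r)) := by decide

lemma grayF_zero : ∀ c a r, grayF c a r 0 = c r := by decide

def par {j : ℕ} (a : Fin j → Fin 2) (r : Fin 2) (m : ℕ) : Bool :=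
  decide ((Finset.univ.filter fun k : Fin j => k.val < m ∧ a k ≠ r).card % 2 = 1)

def fullF {j : ℕ} (c : Fin 2 → Bool) (a : Fin j → Fin 2) (r : Fin 2) (n : ℕ) : Bool :=
  if h : n / 4 < j then
    xor (c r) (xor (par a r (n / 4))
      (if a ⟨n / 4, h⟩ = r then decide (n % 4 = 1 ∨ n % 4 = 2) else decide (2 ≤ n % 4)))
  else false

def fullMat {j : ℕ} (c : Fin 2 → Bool) (a : Fin j → Fin 2) : Fin 2 → Fin (4 * j) → Bool :=
  fun r n => fullF c a r n.val

lemma par_zero {j : ℕ} (a : Fin j → Fin 2) (r : Fin 2) : par a r 0 = false := by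
  unfold par
  rw [Finset.filter_false_of_mem (by intro k _; simp)]
  simp

lemma card_step {j : ℕ} (P : Fin j → Prop) [DecidablePred P] {i : ℕ} (hi : i < j) :
    (Finset.univ.filter fun k : Fin j => k.val < i + 1 ∧ P k).card =
      (Finset.univ.filter fun k : Fin j => k.val < i ∧ P k).card +
        (if P ⟨i, hi⟩ then 1 else 0) := by
  by_cases hP : P ⟨i, hi⟩
  · rw [if_pos hP]
    have hs : (Finset.univ.filter fun k : Fin j => k.val < i + 1 ∧ P k) =
        insert ⟨i, hi⟩ (Finset.univ.filter fun k : Fin j => k.val < i ∧ P k) := by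
      ext k
      simp only [Finset.mem_filter, Finset.mem_insert, Finset.mem_univ, true_and]
      constructor
      · rintro ⟨hk, hPk⟩
        rcases Nat.lt_succ_iff_lt_or_eq.mp hk with h | h
        · exact Or.inr ⟨h, hPk⟩
        · exact Or.inl (Fin.ext h)
      · rintro (rfl | ⟨hk, hPk⟩)
        · exact ⟨Nat.lt_succ_self _, hP⟩
        · exact ⟨Nat.lt_succ_of_lt hk, hPk⟩
    rw [hs, Finset.card_insert_of_notMem (by simp)]
  · rw [if_neg hP]
    have hs : (Finset.univ.filter fun k : Fin j => k.val < i + 1 ∧ P k) =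
        (Finset.univ.filter fun k : Fin j => k.val < i ∧ P k) := by
      apply Finset.filter_congr
      intro k _
      constructor
      · rintro ⟨hk, hPk⟩
        refine ⟨?_, hPk⟩
        rcases Nat.lt_succ_iff_lt_or_eq.mp hk with h | h
        · exact h
        · exact absurd (show P ⟨i, hi⟩ from (Fin.ext h : k = ⟨i, hi⟩) ▸ hPk) hP
      · rintro ⟨hk, hPk⟩
        exact ⟨Nat.lt_succ_of_lt hk, hPk⟩
    rw [hs]
    omega

lemma decide_mod_succ (x : ℕ) : decide ((x + 1) % 2 = 1) = !decide (x % 2 = 1) := by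
  by_cases h : x % 2 = 1
  · have h1 : ¬((x + 1) % 2 = 1) := by omega
    simp [h, h1]
  · have h1 : (x + 1) % 2 = 1 := by omega
    simp [h, h1]

lemma par_succ {j : ℕ} (a : Fin j → Fin 2) (r : Fin 2) {i : ℕ} (hi : i < j) :
    par a r (i + 1) = xor (par a r i) (decide (a ⟨i, hi⟩ ≠ r)) := by
  unfold par
  rw [card_step (fun k => a k ≠ r) hi]
  by_cases h : a ⟨i, hi⟩ ≠ r
  · rw [if_pos h, decide_eq_true h, Bool.xor_true]
    exact decide_mod_succ _
  · rw [if_neg h, decide_eq_false h, Bool.xor_false, Nat.add_zero]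

lemma fullF_eval {j : ℕ} (c : Fin 2 → Bool) (a : Fin j → Fin 2) (r : Fin 2)
    (i : Fin j) (s : ℕ) (hs : s < 4) :
    fullF c a r (4 * i.val + s) =
      xor (c r) (xor (par a r i.val)
        (if a i = r then decide (s = 1 ∨ s = 2) else decide (2 ≤ s))) := by
  have h4 : (4 * i.val + s) / 4 = i.val := by omega
  have h5 : (4 * i.val + s) % 4 = s := by omega
  have hlt : (4 * i.val + s) / 4 < j := by rw [h4]; exact i.isLt
  unfold fullF
  rw [dif_pos hlt]
  simp only [h4, h5, Fin.eta]

lemma block2_fullMat {j : ℕ} (c : Fin 2 → Bool) (a : Fin j → Fin 2) (i : Fin j) :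
    block2 (fullMat c a) i = grayF (fun r => xor (c r) (par a r i.val)) (a i) := by
  funext r s
  show fullF c a r (4 * i.val + s.val) = _
  rw [fullF_eval c a r i s.val s.isLt]
  simp only [grayF]
  cases c r <;> cases par a r i.val <;> simp

lemma xor_xor_ne (C P b1 b2 : Bool) : (xor C (xor P b1) ≠ xor C (xor P b2)) ↔ b1 ≠ b2 := by
  cases C <;> cases P <;> cases b1 <;> cases b2 <;> simp

def tr {j : ℕ} (c : Fin 2 → Bool) (a : Fin j → Fin 2) (r : Fin 2) (n : ℕ) : ℕ :=
  if n < 4 * j - 1 ∧ fullF c a r n ≠ fullF c a r (n + 1) then 1 else 0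

lemma tr0 {j : ℕ} (c : Fin 2 → Bool) (a : Fin j → Fin 2) (r : Fin 2) (i : Fin j) :
    tr c a r (4 * i.val + 0) = if a i = r then 1 else 0 := by
  unfold tr
  have e : 4 * i.val + 0 + 1 = 4 * i.val + 1 := by omega
  rw [e, fullF_eval c a r i 0 (by omega), fullF_eval c a r i 1 (by omega)]
  have hlt : 4 * i.val + 0 < 4 * j - 1 := by have := i.isLt; omega
  by_cases h : a i = r
  · rw [if_pos ⟨hlt, (xor_xor_ne _ _ _ _).mpr (by simp [h])⟩, if_pos h]
  · rw [if_neg (fun hc => ((xor_xor_ne _ _ _ _).mp hc.2) (by simp [h])), if_neg h]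

lemma tr1 {j : ℕ} (c : Fin 2 → Bool) (a : Fin j → Fin 2) (r : Fin 2) (i : Fin j) :
    tr c a r (4 * i.val + 1) = if a i = r then 0 else 1 := by
  unfold tr
  have e : 4 * i.val + 1 + 1 = 4 * i.val + 2 := by omega
  rw [e, fullF_eval c a r i 1 (by omega), fullF_eval c a r i 2 (by omega)]
  have hlt : 4 * i.val + 1 < 4 * j - 1 := by have := i.isLt; omega
  by_cases h : a i = r
  · rw [if_neg (fun hc => ((xor_xor_ne _ _ _ _).mp hc.2) (by simp [h])), if_pos h]
  · rw [if_pos ⟨hlt, (xor_xor_ne _ _ _ _).mpr (by simp [h])⟩, if_neg h]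

lemma tr2 {j : ℕ} (c : Fin 2 → Bool) (a : Fin j → Fin 2) (r : Fin 2) (i : Fin j) :
    tr c a r (4 * i.val + 2) = if a i = r then 1 else 0 := by
  unfold tr
  have e : 4 * i.val + 2 + 1 = 4 * i.val + 3 := by omega
  rw [e, fullF_eval c a r i 2 (by omega), fullF_eval c a r i 3 (by omega)]
  have hlt : 4 * i.val + 2 < 4 * j - 1 := by have := i.isLt; omega
  by_cases h : a i = r
  · rw [if_pos ⟨hlt, (xor_xor_ne _ _ _ _).mpr (by simp [h])⟩, if_pos h]
  · rw [if_neg (fun hc => ((xor_xor_ne _ _ _ _).mp hc.2) (by simp [h])), if_neg h]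

lemma tr3 {j : ℕ} (c : Fin 2 → Bool) (a : Fin j → Fin 2) (r : Fin 2) (i : Fin j) :
    tr c a r (4 * i.val + 3) = 0 := by
  unfold tr
  by_cases hi3 : i.val + 1 < j
  · have h3 := fullF_eval c a r i 3 (by omega)
    have h4 := fullF_eval c a r ⟨i.val + 1, hi3⟩ 0 (by omega)
    simp only [Fin.val_mk] at h4
    have e : 4 * i.val + 3 + 1 = 4 * (i.val + 1) + 0 := by omega
    rw [e, h3, h4, par_succ a r i.isLt]
    simp only [Fin.eta]
    by_cases h : a i = r <;> simp [h]
  · have hn : ¬(4 * i.val + 3 < 4 * j - 1) := by have := i.isLt; omega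
    simp [hn]

lemma trsum {j : ℕ} (c : Fin 2 → Bool) (a : Fin j → Fin 2) (r : Fin 2) (i : Fin j) :
    ∑ s ∈ Finset.range 4, tr c a r (4 * i.val + s) = 1 + (if a i = r then 1 else 0) := by
  rw [Finset.sum_range_succ, Finset.sum_range_succ, Finset.sum_range_succ,
    Finset.sum_range_succ, Finset.sum_range_zero]
  rw [tr0, tr1, tr2, tr3]
  by_cases h : a i = r <;> simp [h]

lemma rowTrans_fullMat {j : ℕ} (c : Fin 2 → Bool) (a : Fin j → Fin 2) (r : Fin 2) :
    rowTrans2 (fullMat c a) r = j + (Finset.univ.filter fun i => a i = r).card := by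
  have hT : rowTrans2 (fullMat c a) r = ∑ n ∈ Finset.range (4 * j), tr c a r n := by
    have hc : (∑ n ∈ Finset.range (4 * j), tr c a r n) =
        ((Finset.range (4 * j)).filter
          (fun n => n < 4 * j - 1 ∧ fullF c a r n ≠ fullF c a r (n + 1))).card := by
      rw [Finset.card_filter]
      rfl
    rw [hc]
    unfold rowTrans2
    refine Finset.card_bij' (fun (p : Fin (4 * j) × Fin (4 * j)) _ => (p.1 : ℕ))
      (fun n hn =>
        (⟨n, by simp only [Finset.mem_filter, Finset.mem_range] at hn; omega⟩,
         ⟨n + 1, by simp only [Finset.mem_filter, Finset.mem_range] at hn; omega⟩))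
      ?_ ?_ ?_ ?_
    · intro p hp
      simp only [Finset.mem_filter, Finset.mem_univ, true_and] at hp
      simp only [Finset.mem_filter, Finset.mem_range]
      have h1 : (p.1 : ℕ) < 4 * j := p.1.isLt
      have h2 : (p.2 : ℕ) < 4 * j := p.2.isLt
      refine ⟨by omega, by omega, ?_⟩
      have e1 : fullMat c a r p.1 = fullF c a r (p.1 : ℕ) := rfl
      have e2 : fullMat c a r p.2 = fullF c a r ((p.1 : ℕ) + 1) := by
        show fullF c a r (p.2 : ℕ) = _
        rw [hp.1]
      rw [← e1, ← e2]
      exact hp.2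
    · intro n hn
      simp only [Finset.mem_filter, Finset.mem_range] at hn
      simp only [Finset.mem_filter, Finset.mem_univ, true_and]
      exact hn.2.2

    · intro p hp
      simp only [Finset.mem_filter, Finset.mem_univ, true_and] at hp
      obtain ⟨p1, p2⟩ := p
      simp only [Prod.mk.injEq]
      exact ⟨trivial, Fin.ext hp.1.symm⟩
    · intro n hn
      rfl
  rw [hT]
  have hprod : (∑ n ∈ Finset.range (4 * j), tr c a r n) =
      ∑ p ∈ (Finset.univ : Finset (Fin j)) ×ˢ Finset.range 4, tr c a r (4 * p.1.val + p.2) := by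
    refine Finset.sum_bij' (fun n hn =>
        ((⟨n / 4, by simp only [Finset.mem_range] at hn; omega⟩ : Fin j), n % 4))
      (fun (p : Fin j × ℕ) _ => 4 * p.1.val + p.2) ?_ ?_ ?_ ?_ ?_
    · intro n hn
      simp only [Finset.mem_range] at hn
      simp only [Finset.mem_product, Finset.mem_univ, Finset.mem_range, true_and]
      omega
    · intro p hp
      simp only [Finset.mem_product, Finset.mem_univ, Finset.mem_range, true_and] at hp
      have := p.1.isLt
      simp only [Finset.mem_range]
      omega
    · intro n hn
      show 4 * (n / 4) + n % 4 = n
      omega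
    · intro p hp
      simp only [Finset.mem_product, Finset.mem_univ, Finset.mem_range, true_and] at hp
      obtain ⟨p1, p2⟩ := p
      simp only [Prod.mk.injEq]
      constructor
      · exact Fin.ext (show (4 * p1.val + p2) / 4 = p1.val by omega)
      · show (4 * p1.val + p2) % 4 = p2
        omega
    · intro n hn
      congr 1
      show n = 4 * (n / 4) + n % 4
      omega
  rw [hprod, Finset.sum_product]
  have hin : ∀ i ∈ (Finset.univ : Finset (Fin j)),
      (∑ s ∈ Finset.range 4, tr c a r (4 * i.val + s)) = 1 + (if a i = r then 1 else 0) :=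
    fun i _ => trsum c a r i
  rw [Finset.sum_congr rfl hin, Finset.sum_add_distrib, Finset.sum_const, Finset.card_univ,
    Fintype.card_fin, smul_eq_mul, mul_one]
  congr 1
  rw [Finset.card_filter]

lemma isGray_block {j : ℕ} (c : Fin 2 → Bool) (a : Fin j → Fin 2) (i : Fin j) :
    IsGrayCode2 (block2 (fullMat c a) i) := by
  rw [block2_fullMat]
  exact gray_of _ _

lemma junction_fullMat {j : ℕ} (c : Fin 2 → Bool) (a : Fin j → Fin 2) (i : Fin j)
    (h : i.val + 1 < j) (r : Fin 2) :
    block2 (fullMat c a) i r 3 = block2 (fullMat c a) ⟨i.val + 1, h⟩ r 0 := by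
  rw [block2_fullMat, block2_fullMat, grayF_three, grayF_zero]
  simp only [Fin.val_mk]
  rw [par_succ a r i.isLt]
  simp only [Fin.eta]
  rw [Bool.xor_assoc]

lemma structure_of {j : ℕ} {d : ℕ} (hj : 0 < j) (A : Fin 2 → Fin (4 * j) → Bool)
    (h : IsEquiparting0 d A) :
    ∃ (c : Fin 2 → Bool) (a : Fin j → Fin 2), A = fullMat c a := by
  have h1 := fun i => (gray_iff (block2 A i)).mp (h.1 i)
  choose cs as hca using h1
  refine ⟨cs ⟨0, hj⟩, as, ?_⟩
  have key : ∀ m (hm : m < j) (r : Fin 2),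
      cs ⟨m, hm⟩ r = xor (cs ⟨0, hj⟩ r) (par as r m) := by
    intro m
    induction m with
    | zero =>
      intro hm r
      rw [par_zero, Bool.xor_false]
    | succ m ih =>
      intro hm r
      have hm' : m < j := by omega
      have emain : grayF (cs ⟨m, hm'⟩) (as ⟨m, hm'⟩) r 3
          = grayF (cs ⟨m + 1, hm⟩) (as ⟨m + 1, hm⟩) r 0 := by
        rw [← hca, ← hca]
        exact h.2.1 ⟨m, hm'⟩ hm r
      rw [grayF_three, grayF_zero] at emain
      rw [← emain, ih hm' r, par_succ as r hm', ← Bool.xor_assoc]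
  funext r n
  have hi : n.val / 4 < j := by have := n.isLt; omega
  have hs4 : n.val % 4 < 4 := by omega
  set i : Fin j := ⟨n.val / 4, hi⟩ with hidef
  set s : Fin 4 := ⟨n.val % 4, hs4⟩ with hsdef
  have hA : A r n = block2 A i r s := by
    unfold block2
    congr 1
    exact Fin.ext (by show n.val = 4 * (n.val / 4) + n.val % 4; omega)
  rw [hA, hca i r s]
  have hB : fullMat (cs ⟨0, hj⟩) as r n = fullF (cs ⟨0, hj⟩) as r (4 * i.val + s.val) := by
    show fullF _ _ r n.val = _
    congr 1
    show n.val = 4 * (n.val / 4) + n.val % 4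
    omega
  rw [hB, fullF_eval _ _ _ i s.val s.isLt]
  have hcsi : cs i r = xor (cs ⟨0, hj⟩ r) (par as r i.val) := key (n.val / 4) hi r
  unfold grayF
  rw [hcsi, Bool.xor_assoc]

lemma fullMat_apply_c {j : ℕ} (hj : 0 < j) (c : Fin 2 → Bool) (a : Fin j → Fin 2) (r : Fin 2) :
    fullMat c a r ⟨0, by omega⟩ = c r := by
  show fullF c a r 0 = c r
  have h0 : (0 : ℕ) = 4 * (⟨0, hj⟩ : Fin j).val + 0 := by simp
  rw [h0, fullF_eval c a r ⟨0, hj⟩ 0 (by omega), par_zero]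
  by_cases h : a ⟨0, hj⟩ = r <;> simp [h]

lemma fullMat_inj {j : ℕ} (hj : 0 < j) {c c' : Fin 2 → Bool} {a a' : Fin j → Fin 2}
    (h : fullMat c a = fullMat c' a') : c = c' ∧ a = a' := by
  have hc : c = c' := by
    funext r
    rw [← fullMat_apply_c hj c a r, ← fullMat_apply_c hj c' a' r, h]
  refine ⟨hc, ?_⟩
  funext i
  set r := a i with hr
  have h0 : fullF c a r (4 * i.val + 0) = fullF c' a' r (4 * i.val + 0) :=
    congrFun (congrFun h r) ⟨4 * i.val + 0, by have := i.isLt; omega⟩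
  have h1 : fullF c a r (4 * i.val + 1) = fullF c' a' r (4 * i.val + 1) :=
    congrFun (congrFun h r) ⟨4 * i.val + 1, by have := i.isLt; omega⟩
  rw [fullF_eval c a r i 0 (by omega), fullF_eval c' a' r i 0 (by omega), hc] at h0
  rw [fullF_eval c a r i 1 (by omega), fullF_eval c' a' r i 1 (by omega), hc] at h1
  have hpar : par a r i.val = par a' r i.val := by
    have h0' : xor (par a r i.val)
          (if a i = r then decide ((0:ℕ) = 1 ∨ (0:ℕ) = 2) else decide (2 ≤ (0:ℕ)))
        = xor (par a' r i.val)
          (if a' i = r then decide ((0:ℕ) = 1 ∨ (0:ℕ) = 2) else decide (2 ≤ (0:ℕ))) := by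
      cases hcr : c' r <;> rw [hcr] at h0 <;> simpa using h0
    simpa using h0'
  have h1' : xor (par a r i.val)
        (if a i = r then decide ((1:ℕ) = 1 ∨ (1:ℕ) = 2) else decide (2 ≤ (1:ℕ)))
      = xor (par a' r i.val)
        (if a' i = r then decide ((1:ℕ) = 1 ∨ (1:ℕ) = 2) else decide (2 ≤ (1:ℕ))) := by
    cases hcr : c' r <;> rw [hcr] at h1 <;> simpa using h1
  rw [hpar] at h1'
  have h1'' : (if a i = r then true else false) = (if a' i = r then true else false) := by
    have := h1'
    cases hpr : par a' r i.val <;> rw [hpr] at this <;> simpa using this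
  rw [if_pos hr.symm] at h1''
  by_cases hfin : a' i = a i
  · exact hfin.symm
  · rw [if_neg (by rw [← hr] at hfin; exact hfin)] at h1''
    exact absurd h1''.symm (by simp)

lemma par_perm {j : ℕ} (a : Fin j → Fin 2) (π : Equiv.Perm (Fin 2)) (r : Fin 2) (m : ℕ) :
    par a (π r) m = par (fun k => π.symm (a k)) r m := by
  unfold par
  have hs : (Finset.univ.filter fun k : Fin j => k.val < m ∧ a k ≠ π r) =
      (Finset.univ.filter fun k : Fin j => k.val < m ∧ (fun k => π.symm (a k)) k ≠ r) := by
    apply Finset.filter_congr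
    intro k _
    have hk : (π.symm (a k) = r) ↔ (a k = π r) := Equiv.symm_apply_eq π
    exact and_congr_right fun _ => (not_congr hk).symm
  rw [hs]

lemma fullMat_transform {j : ℕ} (c : Fin 2 → Bool) (a : Fin j → Fin 2)
    (π : Equiv.Perm (Fin 2)) (ε : Fin 2 → Bool) :
    (fun r (s : Fin (4 * j)) => xor (ε r) (fullMat c a (π r) s)) =
      fullMat (fun r => xor (ε r) (c (π r))) (fun k => π.symm (a k)) := by
  funext r n
  show xor (ε r) (fullF c a (π r) n.val) = fullF _ _ r n.val
  unfold fullF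
  by_cases hn : n.val / 4 < j
  · rw [dif_pos hn, dif_pos hn, par_perm a π r]
    have hcond : (a ⟨n.val / 4, hn⟩ = π r) ↔ (π.symm (a ⟨n.val / 4, hn⟩) = r) :=
      (Equiv.symm_apply_eq π).symm
    rw [if_congr hcond rfl rfl, Bool.xor_assoc]
  · exact absurd (by have := n.isLt; omega) hn

lemma perm2_ext : ∀ (σ τ : Equiv.Perm (Fin 2)) (x : Fin 2), σ x = τ x → σ = τ := by
  intro σ τ x h
  apply Equiv.ext
  intro y
  by_cases hxy : y = x
  · rw [hxy, h]
  · have h1 : σ y ≠ σ x := fun hc => hxy (σ.injective hc)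
    have h2 : τ y ≠ τ x := fun hc => hxy (τ.injective hc)
    rw [h] at h1
    revert h1 h2
    generalize τ x = t
    generalize σ y = u
    generalize τ y = v
    revert t u v
    decide

lemma fin2_cases : ∀ x : Fin 2, x = 0 ∨ x = 1 := by decide

lemma fin2_ne_zero : ∀ x : Fin 2, ¬(x = 0) ↔ x = 1 := by decide

lemma count_S {j k : ℕ} (z : Fin j) (hk : 1 ≤ k) :
    (Finset.univ.filter fun a : Fin j → Fin 2 =>
        a z = 0 ∧ (Finset.univ.filter fun i => a i = 0).card = k).card
      = Nat.choose (j - 1) (k - 1) := by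
  have hcard : ((Finset.univ : Finset (Fin j)).erase z).card = j - 1 := by
    rw [Finset.card_erase_of_mem (Finset.mem_univ z), Finset.card_univ, Fintype.card_fin]
  rw [← hcard, ← Finset.card_powersetCard]
  refine Finset.card_bij'
    (fun a _ => ((Finset.univ.filter fun i => a i = 0).erase z))
    (fun t _ => fun i => if i = z ∨ i ∈ t then (0 : Fin 2) else 1) ?_ ?_ ?_ ?_
  · intro a ha
    simp only [Finset.mem_filter, Finset.mem_univ, true_and] at ha
    rw [Finset.mem_powersetCard]
    constructor
    · exact Finset.erase_subset_erase z (Finset.subset_univ _)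
    · rw [Finset.card_erase_of_mem
        (by simp only [Finset.mem_filter, Finset.mem_univ, true_and]; exact ha.1), ha.2]
  · intro t ht
    rw [Finset.mem_powersetCard] at ht
    have hzt : z ∉ t := fun hz => (Finset.mem_erase.mp (ht.1 hz)).1 rfl
    simp only [Finset.mem_filter, Finset.mem_univ, true_and]
    constructor
    · simp
    · have hfe : (Finset.univ.filter fun i =>
          (if i = z ∨ i ∈ t then (0 : Fin 2) else 1) = 0) = insert z t := by
        ext i
        simp only [Finset.mem_filter, Finset.mem_univ, true_and, Finset.mem_insert]
        by_cases hc : i = z ∨ i ∈ t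
        · simp [hc]
        · rw [if_neg hc]
          simp only [hc, iff_false]
          intro h10
          exact absurd h10 (by decide)
      rw [hfe, Finset.card_insert_of_notMem hzt, ht.2]
      omega
  · intro a ha
    simp only [Finset.mem_filter, Finset.mem_univ, true_and] at ha
    funext i
    show (if i = z ∨ i ∈ (Finset.univ.filter fun i => a i = 0).erase z then (0 : Fin 2) else 1)
      = a i
    by_cases hc : i = z ∨ i ∈ (Finset.univ.filter fun i => a i = 0).erase z
    · rw [if_pos hc]
      rcases hc with rfl | hc
      · exact ha.1.symm
      · have := (Finset.mem_filter.mp (Finset.mem_erase.mp hc).2).2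
        exact this.symm
    · rw [if_neg hc]
      push_neg at hc
      have hne : ¬(a i = 0) := by
        intro h0
        by_cases hiz : i = z
        · exact hc.1 hiz
        · exact absurd (Finset.mem_erase.mpr ⟨hiz,
            Finset.mem_filter.mpr ⟨Finset.mem_univ i, h0⟩⟩) hc.2
      exact ((fin2_ne_zero (a i)).mp hne).symm
  · intro t ht
    rw [Finset.mem_powersetCard] at ht
    have hsub := ht.1
    ext i
    simp only [Finset.mem_erase, Finset.mem_filter, Finset.mem_univ, true_and]
    constructor
    · rintro ⟨hiz, h0⟩
      by_cases hc : i = z ∨ i ∈ t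
      · rcases hc with rfl | hc
        · exact absurd rfl hiz
        · exact hc
      · rw [if_neg hc] at h0
        exact absurd h0 (by decide)
    · intro hit
      refine ⟨fun hiz => (Finset.mem_erase.mp (hsub hit)).1 (by rw [← hiz]), ?_⟩
      · rw [if_pos (Or.inr hit)]

lemma choose_half {m : ℕ} (hm : 1 ≤ m) :
    Nat.choose (m + m) m / 2 = Nat.choose (m + m - 1) (m - 1) := by
  obtain ⟨m', rfl⟩ : ∃ m', m = m' + 1 := ⟨m - 1, by omega⟩
  have e1 : m' + 1 + (m' + 1) = (2 * m' + 1) + 1 := by omega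
  have e2 : m' + 1 + (m' + 1) - 1 = 2 * m' + 1 := by omega
  have e3 : m' + 1 - 1 = m' := by omega
  rw [e2, e3, e1, Nat.choose_succ_succ, Nat.choose_symm_half]
  omega

lemma count_other {j : ℕ} (a : Fin j → Fin 2) :
    (Finset.univ.filter fun i => a i = 1).card
      = j - (Finset.univ.filter fun i => a i = 0).card := by
  have h := Finset.card_filter_add_card_filter_not
    (s := (Finset.univ : Finset (Fin j))) (p := fun i => a i = 0)
  have hfe : (Finset.univ.filter fun i : Fin j => ¬(a i = 0))
      = (Finset.univ.filter fun i => a i = 1) :=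
    Finset.filter_congr (fun i _ => fin2_ne_zero (a i))
  rw [hfe, Finset.card_univ, Fintype.card_fin] at h
  omega

/-- For even `j ≥ 2` and `d = 3j/2`, the number of non-equivalent `0`-equiparting
matrices of size `2 × 4j` equals `(1/2)·C(j, j/2)`: there is a set of
representatives of that cardinality meeting every equivalence class of
`0`-equiparting matrices exactly once. -/
theorem count_zero_equiparting (j : ℕ) (h2 : 2 ≤ j) (hj : Even j) :
    ∃ R : Finset (Fin 2 → Fin (4 * j) → Bool),
      R.card = Nat.choose j (j / 2) / 2 ∧
      (∀ A ∈ R, IsEquiparting0 (3 * j / 2) A) ∧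
      ∀ A : Fin 2 → Fin (4 * j) → Bool, IsEquiparting0 (3 * j / 2) A →
        ∃! B, B ∈ R ∧ MatEquiv A B := by
  obtain ⟨m, hm⟩ := hj
  have hj0 : 0 < j := by omega
  have hm1 : 1 ≤ m := by omega
  set z : Fin j := ⟨0, hj0⟩ with hz
  set S : Finset (Fin j → Fin 2) := Finset.univ.filter
    (fun a => a z = 0 ∧ (Finset.univ.filter fun i => a i = 0).card = j / 2) with hS
  refine ⟨S.image (fun a => fullMat (fun _ => false) a), ?_, ?_, ?_⟩
  · rw [Finset.card_image_of_injective _ (fun a a' haa' => (fullMat_inj hj0 haa').2)]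
    rw [hS, count_S z (by omega)]
    have hch := choose_half hm1
    rw [← hm] at hch
    have hjm : j / 2 = m := by omega
    rw [hjm]
    exact hch.symm
  · intro A hA
    obtain ⟨a, haS, rfl⟩ := Finset.mem_image.mp hA
    simp only [hS, Finset.mem_filter, Finset.mem_univ, true_and] at haS
    refine ⟨isGray_block _ _, junction_fullMat _ _, ?_⟩
    intro r
    rw [rowTrans_fullMat]
    rcases fin2_cases r with rfl | rfl
    · rw [haS.2]; omega
    · rw [count_other, haS.2]; omega
  · intro A hA
    obtain ⟨c, a, rfl⟩ := structure_of hj0 A hA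
    have hcount0 : (Finset.univ.filter fun i => a i = 0).card = j / 2 := by
      have h0 := hA.2.2 0
      rw [rowTrans_fullMat] at h0
      omega
    have hcount1 : (Finset.univ.filter fun i => a i = 1).card = j / 2 := by
      have h1 := hA.2.2 1
      rw [rowTrans_fullMat] at h1
      omega
    have hπ : ∃ π : Equiv.Perm (Fin 2), π.symm (a z) = 0 := by
      rcases fin2_cases (a z) with h | h
      · exact ⟨Equiv.refl _, by simp [h]⟩
      · refine ⟨Equiv.swap 0 1, ?_⟩
        rw [h]
        decide
    obtain ⟨π, hπ0⟩ := hπ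
    set a' : Fin j → Fin 2 := fun k => π.symm (a k) with ha'
    set B := fullMat (fun _ => false) a' with hBdef
    have hBtrans : (fun r (s : Fin (4 * j)) => xor (c (π r)) (fullMat c a (π r) s))
        = fullMat (fun _ => false) a' := by
      have hcc : (fun r => xor (c (π r)) (c (π r))) = (fun _ : Fin 2 => false) := by
        funext r
        exact Bool.xor_self _
      rw [fullMat_transform c a π (fun r => c (π r)), hcc]
    have hBmem : B ∈ S.image (fun a => fullMat (fun _ => false) a) := by
      apply Finset.mem_image_of_mem
      simp only [hS, Finset.mem_filter, Finset.mem_univ, true_and]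
      constructor
      · exact hπ0
      · have hfe : (Finset.univ.filter fun i => a' i = 0)
            = (Finset.univ.filter fun i => a i = π 0) :=
          Finset.filter_congr (fun i _ => Equiv.symm_apply_eq π)
        rw [hfe]
        rcases fin2_cases (π 0) with h | h <;> rw [h]
        · exact hcount0
        · exact hcount1
    refine ⟨B, ⟨hBmem, ⟨π, fun r => c (π r), ?_⟩⟩, ?_⟩
    · intro r s
      exact (congrFun (congrFun hBtrans r) s).symm
    · rintro B' ⟨hB'mem, π', ε', hB'⟩
      obtain ⟨b, hbS, hbeq⟩ := Finset.mem_image.mp hB'mem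
      simp only [hS, Finset.mem_filter, Finset.mem_univ, true_and] at hbS
      have hB'eq : B' = fullMat (fun r => xor (ε' r) (c (π' r))) (fun k => π'.symm (a k)) := by
        rw [← fullMat_transform c a π' ε']
        funext r s
        exact hB' r s
      rw [← hbeq] at hB'eq
      obtain ⟨hc', hab⟩ := fullMat_inj hj0 hB'eq
      have hbz : π'.symm (a z) = 0 := by
        have h := (congrFun hab z).symm
        exact h.trans hbS.1
      have hππ' : π'.symm = π.symm := perm2_ext _ _ (a z) (hbz.trans hπ0.symm)
      rw [← hbeq, hBdef]
      congr 1
      rw [hab, ha']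
      funext k
      rw [hππ']
end

section
/- For the stratification of ℝ^{(d+1)×k} by the cones C_I^S(σ) indexed by symbols (σ | I | S) ∈ S_k × {1,...,d+2}^k × {±1}^k, each nonempty cone C_{i_1,...,i_k}^{s_1,...,s_k}(σ) is a relatively open polyhedral cone of dimension (d+2)k − (i_1 + ... + i_k). -/
open Pointwise

/-- The relation `y <ᵢ y'` on vectors of `ℝ^{d+1}`: for `1 ≤ i ≤ d+1` it means
that `y` and `y'` agree in the first `i − 1` coordinates and the `i`-th
coordinate of `y` is strictly smaller than that of `y'`; for `i = d+2` (or any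
`i > d+1`) it means `y = y'`. -/
def ltIdx (d : ℕ) (i : ℕ) (y y' : Fin (d + 1) → ℝ) : Prop :=
  if h : i ≤ d + 1 then
    (∀ m : Fin (d + 1), (m : ℕ) < i - 1 → y m = y' m) ∧
      y ⟨i - 1, by omega⟩ < y' ⟨i - 1, by omega⟩
  else y = y'

/-- The cone `C_I^S(σ) ⊆ ℝ^{(d+1)×k}` of the combinatorial stratification: all
matrices `(x_1, ..., x_k)` (columns `x_t ∈ ℝ^{d+1}`) satisfying the chain
`0 <_{i_1} s_1 x_{σ_1} <_{i_2} s_2 x_{σ_2} <_{i_3} ⋯ <_{i_k} s_k x_{σ_k}`. -/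
def strataCone (d k : ℕ) (σ : Equiv.Perm (Fin k)) (I : Fin k → ℕ)
    (s : Fin k → ℝ) : Set (Fin k → Fin (d + 1) → ℝ) :=
  {x | ∀ t : Fin k, ltIdx d (I t)
    (if h : 0 < t.val then
        s ⟨t.val - 1, by have := t.isLt; omega⟩ • x (σ ⟨t.val - 1, by have := t.isLt; omega⟩)
      else 0)
    (s t • x (σ t))}

/-- The linear functional `x ↦ (s t • x (σ t)) m − prev m`. -/
def colF (d k : ℕ) (σ : Equiv.Perm (Fin k)) (s : Fin k → ℝ) (t : Fin k) (m : Fin (d + 1)) :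
    (Fin k → Fin (d + 1) → ℝ) →ₗ[ℝ] ℝ where
  toFun x := s t * x (σ t) m -
    (if h : 0 < t.val then
      s ⟨t.val - 1, by have := t.isLt; omega⟩ * x (σ ⟨t.val - 1, by have := t.isLt; omega⟩) m
    else 0)
  map_add' x y := by by_cases h : 0 < t.val <;> simp [h] <;> ring
  map_smul' c x := by by_cases h : 0 < t.val <;> simp [h] <;> ring

lemma mem_strataCone_iff (d k : ℕ) (σ : Equiv.Perm (Fin k)) (I : Fin k → ℕ)
    (hI : ∀ t, 1 ≤ I t ∧ I t ≤ d + 2) (s : Fin k → ℝ) (x : Fin k → Fin (d + 1) → ℝ) :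
    x ∈ strataCone d k σ I s ↔ ∀ t (m : Fin (d + 1)),
      ((m : ℕ) < I t - 1 → colF d k σ s t m x = 0) ∧
      ((m : ℕ) = I t - 1 → 0 < colF d k σ s t m x) := by
  unfold strataCone ltIdx colF
  simp only [Set.mem_setOf_eq, LinearMap.coe_mk, AddHom.coe_mk]
  refine forall_congr' fun t => ?_
  obtain ⟨h1, h2⟩ := hI t
  by_cases h : I t ≤ d + 1
  · rw [dif_pos h]
    constructor
    · rintro ⟨he, hl⟩ m
      constructor
      · intro hm
        have := he m hm
        by_cases ht : 0 < t.val <;> simp_all [sub_eq_zero]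
      · intro hm
        have hm' : (⟨I t - 1, by omega⟩ : Fin (d + 1)) = m := by ext; simp [hm]
        rw [hm'] at hl
        by_cases ht : 0 < t.val <;> simp_all [sub_pos]
    · intro hall
      constructor
      · intro m hm
        have := (hall m).1 hm
        by_cases ht : 0 < t.val <;> simp_all [sub_eq_zero]
      · have := (hall ⟨I t - 1, by omega⟩).2 rfl
        by_cases ht : 0 < t.val <;> simp_all [sub_pos]
  · rw [dif_neg h]
    have hIt : I t = d + 2 := by omega
    constructor
    · intro he m
      refine ⟨fun _ => ?_, fun hm => by simp [hIt] at hm; omega⟩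
      have := congrFun he m
      by_cases ht : 0 < t.val <;> simp_all [sub_eq_zero]
    · intro hall
      funext m
      have := (hall m).1 (by have := m.isLt; omega)
      by_cases ht : 0 < t.val <;> simp_all [sub_eq_zero]

/-- `{m : Fin n // m < c} ≃ Fin c` when `c ≤ n`. -/
def finSubEquiv (n c : ℕ) (h : c ≤ n) : {m : Fin n // (m : ℕ) < c} ≃ Fin c where
  toFun m := ⟨m.1, m.2⟩
  invFun j := ⟨⟨j.1, lt_of_lt_of_le j.2 h⟩, j.2⟩
  left_inv _ := rfl
  right_inv _ := rfl

/-- Each nonempty cone `C_{i_1,…,i_k}^{s_1,…,s_k}(σ)` of the stratification of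
`ℝ^{(d+1)×k}` is a relatively open polyhedral cone of dimension
`(d+2)k − (i_1 + ⋯ + i_k)`: it is convex, invariant under positive scaling,
equal to its intrinsic interior, cut out by finitely many linear equations and
strict linear inequalities, and the dimension of (the direction of) its affine
hull is `(d+2)k − ∑ i_t`. -/
theorem strataCone_relOpen_polyhedral_dim (d k : ℕ) (σ : Equiv.Perm (Fin k))
    (I : Fin k → ℕ) (hI : ∀ t, 1 ≤ I t ∧ I t ≤ d + 2)
    (s : Fin k → ℝ) (hs : ∀ t, s t = 1 ∨ s t = -1)
    (hne : (strataCone d k σ I s).Nonempty) :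
    Convex ℝ (strataCone d k σ I s) ∧
    (∀ c : ℝ, 0 < c → c • strataCone d k σ I s = strataCone d k σ I s) ∧
    intrinsicInterior ℝ (strataCone d k σ I s) = strataCone d k σ I s ∧
    (∃ (m n : ℕ) (f : Fin m → ((Fin k → Fin (d + 1) → ℝ) →ₗ[ℝ] ℝ))
        (g : Fin n → ((Fin k → Fin (d + 1) → ℝ) →ₗ[ℝ] ℝ)),
      strataCone d k σ I s = {x | (∀ a, f a x = 0) ∧ ∀ b, 0 < g b x}) ∧
    Module.finrank ℝ (affineSpan ℝ (strataCone d k σ I s)).direction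
      = (d + 2) * k - ∑ t, I t := by
  classical
  obtain ⟨x₀, hx₀⟩ := hne
  let A := {p : Fin k × Fin (d + 1) // (p.2 : ℕ) < I p.1 - 1}
  let B := {p : Fin k × Fin (d + 1) // (p.2 : ℕ) = I p.1 - 1}
  haveI : Fintype A := Fintype.ofFinite A
  haveI : Fintype B := Fintype.ofFinite B
  let fA : A → ((Fin k → Fin (d + 1) → ℝ) →ₗ[ℝ] ℝ) := fun a => colF d k σ s a.1.1 a.1.2
  let fB : B → ((Fin k → Fin (d + 1) → ℝ) →ₗ[ℝ] ℝ) := fun b => colF d k σ s b.1.1 b.1.2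
  have hSeq : strataCone d k σ I s = {x | ∀ a : A, fA a x = 0} ∩ {x | ∀ b : B, 0 < fB b x} := by
    ext x
    rw [mem_strataCone_iff d k σ I hI s x]
    constructor
    · intro h; exact ⟨fun a => (h a.1.1 a.1.2).1 a.2, fun b => (h b.1.1 b.1.2).2 b.2⟩
    · rintro ⟨h1, h2⟩ t m
      exact ⟨fun hm => h1 ⟨(t, m), hm⟩, fun hm => h2 ⟨(t, m), hm⟩⟩
  have hx₀' : (∀ a : A, fA a x₀ = 0) ∧ ∀ b : B, 0 < fB b x₀ := by
    rw [hSeq] at hx₀; exact hx₀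
  have hss : ∀ t, s t * s t = 1 := fun t => by rcases hs t with h | h <;> rw [h] <;> norm_num
  -- surjectivity of the equality functionals
  have hsurj : Function.Surjective (LinearMap.pi fA) := by
    intro c
    let c' : Fin k → Fin (d + 1) → ℝ :=
      fun t' m => if h : (m : ℕ) < I t' - 1 then c ⟨(t', m), h⟩ else 0
    let c'' : ℕ → Fin (d + 1) → ℝ := fun t' m => if h : t' < k then c' ⟨t', h⟩ m else 0
    let y : Fin k → Fin (d + 1) → ℝ := fun t m => ∑ t' ∈ Finset.range (t.val + 1), c'' t' m
    refine ⟨fun j => s (σ.symm j) • y (σ.symm j), ?_⟩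
    funext a
    obtain ⟨⟨t, m⟩, hm⟩ := a
    have key : ∀ u : Fin k, s u * (s (σ.symm (σ u)) • y (σ.symm (σ u))) m = y u m := by
      intro u
      simp only [Equiv.symm_apply_apply, Pi.smul_apply, smul_eq_mul, ← mul_assoc, hss u, one_mul]
    simp only [LinearMap.pi_apply]
    show colF d k σ s t m _ = _
    simp only [colF, LinearMap.coe_mk, AddHom.coe_mk]
    have hcend : c'' t.val m = c ⟨(t, m), hm⟩ := by
      simp only [c'', c', dif_pos t.isLt, Fin.eta, dif_pos hm]
    by_cases ht : 0 < t.val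
    · rw [dif_pos ht, key t, key ⟨t.val - 1, by have := t.isLt; omega⟩]
      show (∑ t' ∈ Finset.range (t.val + 1), c'' t' m)
          - (∑ t' ∈ Finset.range (t.val - 1 + 1), c'' t' m) = _
      rw [show t.val - 1 + 1 = t.val by omega, Finset.sum_range_succ]
      rw [add_sub_cancel_left, hcend]
    · rw [dif_neg ht, key t]
      show (∑ t' ∈ Finset.range (t.val + 1), c'' t' m) - (0 : Fin (d+1) → ℝ) m = _
      rw [show t.val = 0 by omega] at hcend ⊢
      simp [Finset.sum_range_succ, hcend]
  -- the affine span
  have hWset : ((LinearMap.ker (LinearMap.pi fA)).toAffineSubspace : Set (Fin k → Fin (d + 1) → ℝ))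
      = {x | ∀ a : A, fA a x = 0} := by
    ext x
    simp only [AffineSubspace.mem_coe, Submodule.mem_toAffineSubspace, LinearMap.mem_ker,
      Set.mem_setOf_eq, funext_iff, LinearMap.pi_apply, Pi.zero_apply]
  have hU : IsOpen {x : Fin k → Fin (d + 1) → ℝ | ∀ b : B, 0 < fB b x} := by
    have : {x : Fin k → Fin (d + 1) → ℝ | ∀ b : B, 0 < fB b x}
        = ⋂ b : B, (fB b) ⁻¹' Set.Ioi 0 := by
      ext x; simp [Set.mem_iInter]
    rw [this]
    exact isOpen_iInter_of_finite fun b =>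
      isOpen_Ioi.preimage (fB b).continuous_of_finiteDimensional
  have hspan : affineSpan ℝ (strataCone d k σ I s)
      = (LinearMap.ker (LinearMap.pi fA)).toAffineSubspace := by
    apply le_antisymm
    · rw [affineSpan_le]
      intro x hx
      rw [hSeq] at hx
      rw [hWset]
      exact hx.1
    · intro w hw
      have hw' : (LinearMap.pi fA) w = 0 := by
        simpa [Submodule.mem_toAffineSubspace, LinearMap.mem_ker] using hw
      have hwa : ∀ a : A, fA a w = 0 := by
        intro a
        have := congrFun hw' a
        simpa using this
      have hcont : Continuous fun ε : ℝ => x₀ + ε • (w - x₀) :=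
        continuous_const.add (continuous_id.smul continuous_const)
      have hnb : (fun ε : ℝ => x₀ + ε • (w - x₀)) ⁻¹' {x | ∀ b : B, 0 < fB b x} ∈ nhds (0 : ℝ) :=
        hcont.continuousAt.preimage_mem_nhds (hU.mem_nhds (by simpa using hx₀'.2))
      obtain ⟨ε, hεU, hεpos⟩ :=
        Filter.nonempty_of_mem (f := nhdsWithin (0:ℝ) (Set.Ioi 0))
          (Filter.inter_mem (mem_nhdsWithin_of_mem_nhds hnb) self_mem_nhdsWithin)
      have hεpos : (0 : ℝ) < ε := hεpos
      have hz : (x₀ + ε • (w - x₀)) ∈ strataCone d k σ I s := by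
        rw [hSeq]
        refine ⟨fun a => ?_, hεU⟩
        have h0 : fA a x₀ = 0 := hx₀'.1 a
        simp [map_add, map_smul, map_sub, h0, hwa a]
      have hx0mem : x₀ ∈ affineSpan ℝ (strataCone d k σ I s) := subset_affineSpan _ _ hx₀
      have hzmem := subset_affineSpan ℝ _ hz
      have hwrepr : w = ε⁻¹ • ((x₀ + ε • (w - x₀)) -ᵥ x₀) +ᵥ x₀ := by
        have hεne : ε ≠ 0 := ne_of_gt hεpos
        simp only [vsub_eq_sub, vadd_eq_add, add_sub_cancel_left, smul_smul,
          inv_mul_cancel₀ hεne, one_smul]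
        abel
      rw [hwrepr]
      exact AffineSubspace.smul_vsub_vadd_mem _ _ hzmem hx0mem hx0mem
  -- intrinsic interior
  have hmemS : ∀ p : affineSpan ℝ (strataCone d k σ I s),
      (p : Fin k → Fin (d + 1) → ℝ) ∈ {x | ∀ b : B, 0 < fB b x} →
      (p : Fin k → Fin (d + 1) → ℝ) ∈ strataCone d k σ I s := by
    intro p hp
    have hmem := hspan.le p.2
    have hpA : (p : Fin k → Fin (d + 1) → ℝ) ∈ {x | ∀ a : A, fA a x = 0} := by
      rw [← hWset]
      exact hmem
    exact (Set.ext_iff.mp hSeq _).mpr ⟨hpA, hp⟩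
  have hIntr : intrinsicInterior ℝ (strataCone d k σ I s) = strataCone d k σ I s := by
    apply Set.Subset.antisymm intrinsicInterior_subset
    intro x hxS
    rw [intrinsicInterior]
    refine ⟨⟨x, subset_affineSpan ℝ _ hxS⟩, ?_, rfl⟩
    have hsub : ((↑) ⁻¹' {x | ∀ b : B, 0 < fB b x} :
          Set (affineSpan ℝ (strataCone d k σ I s)))
        ⊆ (↑) ⁻¹' strataCone d k σ I s := fun p hp => hmemS p hp
    refine interior_maximal hsub (hU.preimage continuous_subtype_val) ?_
    show x ∈ {x | ∀ b : B, 0 < fB b x}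
    rw [hSeq] at hxS
    exact hxS.2
  -- convexity
  have hconv : Convex ℝ (strataCone d k σ I s) := by
    rw [hSeq]
    apply Convex.inter
    · have : {x : Fin k → Fin (d + 1) → ℝ | ∀ a : A, fA a x = 0}
          = ⋂ a : A, {x | fA a x = 0} := by ext x; simp
      rw [this]
      exact convex_iInter fun a => convex_hyperplane (fA a).isLinear 0
    · have : {x : Fin k → Fin (d + 1) → ℝ | ∀ b : B, 0 < fB b x}
          = ⋂ b : B, (fB b) ⁻¹' Set.Ioi 0 := by ext x; simp
      rw [this]
      exact convex_iInter fun b => (convex_Ioi (0:ℝ)).linear_preimage (fB b)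
  -- scaling
  have hscale : ∀ c : ℝ, 0 < c → c • strataCone d k σ I s = strataCone d k σ I s := by
    intro c hc
    ext x
    rw [Set.mem_smul_set_iff_inv_smul_mem₀ (ne_of_gt hc)]
    rw [hSeq]
    have hc' : (0 : ℝ) < c⁻¹ := inv_pos.mpr hc
    simp only [Set.mem_inter_iff, Set.mem_setOf_eq, map_smul, smul_eq_mul]
    constructor <;> rintro ⟨h1, h2⟩ <;> refine ⟨fun a => ?_, fun b => ?_⟩
    · have := h1 a
      rcases mul_eq_zero.mp this with h | h
      · exact absurd h (ne_of_gt hc')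
      · exact h
    · have := h2 b
      nlinarith
    · rw [h1 a, mul_zero]
    · exact mul_pos hc' (h2 b)
  refine ⟨hconv, hscale, hIntr, ?_, ?_⟩
  · refine ⟨Fintype.card A, Fintype.card B, fA ∘ (Fintype.equivFin A).symm,
      fB ∘ (Fintype.equivFin B).symm, ?_⟩
    rw [hSeq]
    ext x
    simp only [Set.mem_inter_iff, Set.mem_setOf_eq, Function.comp_apply]
    constructor
    · rintro ⟨h1, h2⟩
      exact ⟨fun i => h1 _, fun j => h2 _⟩
    · rintro ⟨h1, h2⟩
      refine ⟨fun a => ?_, fun b => ?_⟩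
      · simpa using h1 (Fintype.equivFin A a)
      · simpa using h2 (Fintype.equivFin B b)
  · rw [hspan, Submodule.toAffineSubspace_direction]
    have h1 := LinearMap.finrank_range_add_finrank_ker (LinearMap.pi fA)
    rw [LinearMap.range_eq_top.mpr hsurj, finrank_top,
      Module.finrank_fintype_fun_eq_card] at h1
    have h2 : Module.finrank ℝ (Fin k → Fin (d + 1) → ℝ) = k * (d + 1) := by
      rw [Module.finrank_pi_fintype]
      simp [Module.finrank_fintype_fun_eq_card]
    have hcard : Fintype.card A = ∑ t, (I t - 1) := by
      rw [Fintype.card_congr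
        (Equiv.subtypeProdEquivSigmaSubtype fun (t : Fin k) (m : Fin (d + 1)) => (m : ℕ) < I t - 1)]
      rw [Fintype.card_sigma]
      refine Finset.sum_congr rfl fun t _ => ?_
      rw [Fintype.card_congr (finSubEquiv (d + 1) (I t - 1) (by have := (hI t).2; omega))]
      exact Fintype.card_fin _
    have hsum1 : ∑ t, (I t - 1) + k = ∑ t, I t := by
      calc ∑ t, (I t - 1) + k = ∑ t, (I t - 1) + ∑ _t : Fin k, 1 := by simp
        _ = ∑ t, (I t - 1 + 1) := Finset.sum_add_distrib.symm
        _ = ∑ t, I t := Finset.sum_congr rfl fun t _ => by have := (hI t).1; omega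
    have hsum2 : ∑ t : Fin k, I t ≤ (d + 2) * k := by
      calc ∑ t : Fin k, I t ≤ ∑ t : Fin k, (d + 2) :=
        Finset.sum_le_sum fun t _ => (hI t).2
      _ = (d + 2) * k := by simp [Finset.sum_const, mul_comm]
    have hsum3 : k ≤ ∑ t : Fin k, I t := by
      calc k = ∑ t : Fin k, 1 := by simp
      _ ≤ ∑ t : Fin k, I t := Finset.sum_le_sum fun t _ => (hI t).1
    rw [h2, hcard] at h1
    have hk : k * (d + 1) + k = (d + 2) * k := by ring
    omega
end
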